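/- The limit as t → 0⁺ of H(t) = (n-1)coth²(t) - (1/sinh²(t))·(2 + (n-3)·t·coth(t)) equals 2n/3, and the limit as t → ∞ equals n-1. -/

import Mathlib

open Real Filter Topology

/-!
Since `coth² t = 1 + 1 / sinh² t`, the function equals
`(n - 1) + (n - 3) (sinh t - t cosh t) / sinh³ t`, and `sinh t - t cosh t ~ -t³/3` at `0`
(l'Hôpital), which gives `2n/3`. At infinity `coth t → 1` while `1 / sinh² t` and
`t / sinh² t` tend to `0`.
-/

namespace Real

theorem tendsto_sinh_atTop : Tendsto sinh atTop atTop :=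
  tendsto_atTop_mono' atTop ((eventually_ge_atTop 0).mono fun _ ht => self_le_sinh_iff.2 ht)
    tendsto_id

theorem tendsto_inv_sinh_atTop : Tendsto (fun t => (sinh t)⁻¹) atTop (𝓝 0) :=
  tendsto_inv_atTop_zero.comp tendsto_sinh_atTop

theorem tendsto_cosh_div_sinh_atTop : Tendsto (fun t => cosh t / sinh t) atTop (𝓝 1) := by
  have h : Tendsto (fun t => 1 + exp (-t) * (sinh t)⁻¹) atTop (𝓝 (1 + 0 * 0)) :=
    tendsto_const_nhds.add (tendsto_exp_neg_atTop_nhds_zero.mul tendsto_inv_sinh_atTop)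
  rw [mul_zero, add_zero] at h
  refine h.congr' ?_
  filter_upwards [eventually_gt_atTop 0] with t ht
  rw [← cosh_sub_sinh]
  field_simp [(sinh_pos_iff.2 ht).ne']
  ring

theorem tendsto_self_div_sinh_sq_atTop : Tendsto (fun t => t / sinh t ^ 2) atTop (𝓝 0) := by
  refine tendsto_of_tendsto_of_tendsto_of_le_of_le' tendsto_const_nhds tendsto_inv_sinh_atTop
    ?_ ?_
  all_goals filter_upwards [eventually_gt_atTop 0] with t ht
  · positivity
  · have hs := sinh_pos_iff.2 ht
    rw [div_le_iff₀ (by positivity), sq, ← mul_assoc, inv_mul_cancel₀ hs.ne', one_mul]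
    exact self_le_sinh_iff.2 ht.le

theorem tendsto_sinh_div_self : Tendsto (fun t => sinh t / t) (𝓝[≠] 0) (𝓝 1) := by
  simpa [div_eq_inv_mul] using (hasDerivAt_sinh 0).tendsto_slope_zero

theorem tendsto_self_div_sinh : Tendsto (fun t => t / sinh t) (𝓝[≠] 0) (𝓝 1) := by
  simpa using tendsto_sinh_div_self.inv₀ one_ne_zero

theorem tendsto_sinh_sub_mul_cosh_div_pow_three :
    Tendsto (fun t => (sinh t - t * cosh t) / t ^ 3) (𝓝[≠] 0) (𝓝 (-1 / 3)) := by
  have hcont : Continuous fun t => sinh t - t * cosh t := by fun_prop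
  refine HasDerivAt.lhopital_zero_nhdsNE (f' := fun t => -(t * sinh t)) (g' := fun t => 3 * t ^ 2)
    (Eventually.of_forall fun t => ?_) (Eventually.of_forall fun t => ?_) ?_ ?_ ?_ ?_
  · exact ((hasDerivAt_sinh t).sub ((hasDerivAt_id' t).mul (hasDerivAt_cosh t))).congr_deriv
      (by ring)
  · simpa using hasDerivAt_pow 3 t
  · filter_upwards [self_mem_nhdsWithin] with t (ht : t ≠ 0)
    positivity
  · simpa using (hcont.tendsto 0).mono_left nhdsWithin_le_nhds
  · simpa using ((continuous_pow 3).tendsto (0 : ℝ)).mono_left nhdsWithin_le_nhds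
  · have h := tendsto_sinh_div_self.neg.div_const 3
    rw [neg_div] at h ⊢
    refine h.congr' ?_
    filter_upwards [self_mem_nhdsWithin] with t (ht : t ≠ 0)
    field_simp

theorem tendsto_sinh_sub_mul_cosh_div_sinh_pow_three :
    Tendsto (fun t => (sinh t - t * cosh t) / sinh t ^ 3) (𝓝[≠] 0) (𝓝 (-1 / 3)) := by
  have h := tendsto_sinh_sub_mul_cosh_div_pow_three.mul (tendsto_self_div_sinh.pow 3)
  rw [one_pow, mul_one] at h
  refine h.congr' ?_
  filter_upwards [self_mem_nhdsWithin] with t (ht : t ≠ 0)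
  field_simp

end Real

/-- The coefficient `a - 2` is the one for which the `1 / t²` singularities at `0` cancel. -/
noncomputable def hyperbolicH (a t : ℝ) : ℝ :=
  a * (cosh t / sinh t) ^ 2 - (1 / sinh t ^ 2) * (2 + (a - 2) * t * (cosh t / sinh t))

theorem hyperbolicH_eq (a : ℝ) {t : ℝ} (ht : sinh t ≠ 0) :
    hyperbolicH a t = a + (a - 2) * ((sinh t - t * cosh t) / sinh t ^ 3) := by
  rw [hyperbolicH]
  field_simp
  linear_combination a * sinh t * cosh_sq t

theorem tendsto_hyperbolicH_nhdsNE (a : ℝ) :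
    Tendsto (hyperbolicH a) (𝓝[≠] 0) (𝓝 (2 * (a + 1) / 3)) := by
  have h := tendsto_const_nhds (x := a).add
    ((tendsto_const_nhds (x := a - 2)).mul tendsto_sinh_sub_mul_cosh_div_sinh_pow_three)
  rw [show a + (a - 2) * (-1 / 3) = 2 * (a + 1) / 3 by ring] at h
  refine h.congr' ?_
  filter_upwards [self_mem_nhdsWithin] with t (ht : t ≠ 0)
  exact (hyperbolicH_eq a (sinh_ne_zero.2 ht)).symm

theorem tendsto_hyperbolicH_atTop (a : ℝ) : Tendsto (hyperbolicH a) atTop (𝓝 a) := by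
  have h := (tendsto_const_nhds (x := a)).mul (tendsto_cosh_div_sinh_atTop.pow 2) |>.sub
    (((tendsto_const_nhds (x := 2)).mul (tendsto_inv_sinh_atTop.pow 2)).add
      (((tendsto_const_nhds (x := a - 2)).mul tendsto_self_div_sinh_sq_atTop).mul
        tendsto_cosh_div_sinh_atTop))
  rw [show a * 1 ^ 2 - (2 * 0 ^ 2 + (a - 2) * 0 * 1) = a by ring] at h
  refine h.congr fun t => ?_
  rw [hyperbolicH]
  ring

theorem hyperbolic_H_limits_general (n : ℕ)
    (H : ℝ → ℝ)
    (hH : ∀ t : ℝ, H t = ((n : ℝ) - 1) * (Real.cosh t / Real.sinh t) ^ 2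
      - (1 / Real.sinh t ^ 2) * (2 + ((n : ℝ) - 3) * t * (Real.cosh t / Real.sinh t))) :
    Filter.Tendsto H (nhdsWithin 0 (Set.Ioi (0 : ℝ))) (nhds (2 * (n : ℝ) / 3)) ∧
    Filter.Tendsto H Filter.atTop (nhds ((n : ℝ) - 1)) := by
  obtain rfl : H = hyperbolicH ((n : ℝ) - 1) := funext fun t => by rw [hH, hyperbolicH]; ring
  refine ⟨?_, tendsto_hyperbolicH_atTop _⟩
  convert (tendsto_hyperbolicH_nhdsNE _).mono_left (nhdsGT_le_nhdsNE 0) using 2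
  ring

/-- Limits of `H(t) = (n-1)coth²t - (2 + (n-3)t coth t)/sinh²t`:
`H(t) → 2n/3` as `t → 0⁺` and `H(t) → n-1` as `t → ∞`. -/
theorem hyperbolic_H_limits (n : ℕ) (hn : 2 ≤ n)
    (H : ℝ → ℝ)
    (hH : ∀ t : ℝ, H t = ((n : ℝ) - 1) * (Real.cosh t / Real.sinh t) ^ 2
      - (1 / Real.sinh t ^ 2) * (2 + ((n : ℝ) - 3) * t * (Real.cosh t / Real.sinh t))) :
    Filter.Tendsto H (nhdsWithin 0 (Set.Ioi (0 : ℝ))) (nhds (2 * (n : ℝ) / 3)) ∧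
    Filter.Tendsto H Filter.atTop (nhds ((n : ℝ) - 1)) :=
  hyperbolic_H_limits_general n H hH
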